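/- arXiv:1705.07499 — 6 statements merged into one kernel-verified Lean document; each statement's English description precedes it below -/
import Mathlib

section
/- Let n ≥ 2, let L be a finite set, let α be a permutation of [n] ∪ L, and let 0 ≤ i < j ≤ n. Then the face maps satisfy the semisimplicial identity D_i(D_j(α)) = D_{j−1}(D_i(α)) in Symm([n−2] ∪ L); consequently the sets Symm([n] ∪ L), n ≥ 0, together with the maps D_i form a semisimplicial set. -/
/-- `Option α ⊕ β ≃ Option (α ⊕ β)`, sending `inl none` to `none`. -/
def optionSumEquiv (α β : Type*) : (Option α ⊕ β) ≃ Option (α ⊕ β) where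
  toFun x :=
    match x with
    | Sum.inl (some a) => some (Sum.inl a)
    | Sum.inl none => none
    | Sum.inr b => some (Sum.inr b)
  invFun x :=
    match x with
    | some (Sum.inl a) => Sum.inl (some a)
    | some (Sum.inr b) => Sum.inr b
    | none => Sum.inl none
  left_inv x := by rcases x with (_ | a) | b <;> rfl
  right_inv x := by rcases x with _ | (a | b) <;> rfl

/-- The identification of `[n] ∪ L` with `Option ([n-1] ∪ L)` sending `i` to `none`:
away from `i` it is the order-preserving renormalization `[n] \ {i} → [n-1]`
(the inverse of `d_i`, i.e. the map `s_i` restricted to `[n] \ {i}`), and the identity on `L`. -/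
def faceEquiv (n : ℕ) (L : Type*) (i : Fin (n + 1)) :
    (Fin (n + 1) ⊕ L) ≃ Option (Fin n ⊕ L) :=
  ((finSuccEquiv' i).sumCongr (Equiv.refl L)).trans (optionSumEquiv (Fin n) L)

/-- The `i`-th face map `D_i : Symm([n] ∪ L) → Symm([n-1] ∪ L)`, given by
`D_i(α) = s_i ∘ α ∘ (i α⁻¹(i)) ∘ d_i`, i.e. removing the symbol `i` from the cycle
decomposition of `α` and renormalizing the remaining elements of `[n]`. -/
def faceMap {n : ℕ} {L : Type*} (i : Fin (n + 1)) (α : Equiv.Perm (Fin (n + 1) ⊕ L)) :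
    Equiv.Perm (Fin n ⊕ L) :=
  Equiv.removeNone (((faceEquiv n L i).symm.trans α).trans (faceEquiv n L i))

open Classical in
noncomputable def jmp {S : Type*} (p : S) (g : S → S) (x : S) : S :=
  if g x = p then g p else g x

lemma faceEquiv_symm_none (n : ℕ) (L : Type*) (i : Fin (n + 1)) :
    (faceEquiv n L i).symm none = Sum.inl i := by
  simp [faceEquiv, optionSumEquiv, finSuccEquiv'_symm_none]

lemma faceEquiv_symm_some_inl (n : ℕ) (L : Type*) (i : Fin (n + 1)) (k : Fin n) :
    (faceEquiv n L i).symm (some (Sum.inl k)) = Sum.inl (i.succAbove k) := by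
  simp [faceEquiv, optionSumEquiv, finSuccEquiv'_symm_some]

lemma faceEquiv_symm_some_inr (n : ℕ) (L : Type*) (i : Fin (n + 1)) (l : L) :
    (faceEquiv n L i).symm (some (Sum.inr l)) = Sum.inr l := by
  simp [faceEquiv, optionSumEquiv]

lemma faceMap_spec {n : ℕ} {L : Type*} (i : Fin (n + 1)) (α : Equiv.Perm (Fin (n + 1) ⊕ L))
    (x : Fin n ⊕ L) :
    (faceEquiv n L i).symm (some (faceMap i α x)) =
      jmp ((faceEquiv n L i).symm none) (⇑α) ((faceEquiv n L i).symm (some x)) := by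
  classical
  set e := faceEquiv n L i with he
  set π := ((e.symm.trans α).trans e) with hπ
  have hπs : ∀ z, π z = e (α (e.symm z)) := fun z => rfl
  by_cases h : α (e.symm (some x)) = e.symm none
  · have hπx : π (some x) = none := by
      rw [hπs, h, Equiv.apply_symm_apply]
    have h1 : some (faceMap i α x) = π none := Equiv.removeNone_none π hπx
    have h2 : e.symm (some (faceMap i α x)) = α (e.symm none) := by
      rw [h1, hπs, Equiv.symm_apply_apply]
    rw [h2, jmp, if_pos h]
  · obtain ⟨y, hy⟩ : ∃ y, π (some x) = some y := by
      rcases hw : π (some x) with _ | y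
      · exfalso; apply h
        rw [hπs] at hw
        have := congrArg e.symm hw
        rwa [Equiv.symm_apply_apply] at this
      · exact ⟨y, rfl⟩
    have h1 : some (faceMap i α x) = π (some x) := Equiv.removeNone_some π ⟨y, hy⟩
    have h2 : e.symm (some (faceMap i α x)) = α (e.symm (some x)) := by
      rw [h1, hπs, Equiv.symm_apply_apply]
    rw [h2, jmp, if_neg h]

lemma jmp_conj {S T : Type*} (e : S ≃ Option T) (D : T → T) (g : S → S)
    (h : ∀ y, e.symm (some (D y)) = g (e.symm (some y))) (q y : T) :
    e.symm (some (jmp q D y)) = jmp (e.symm (some q)) g (e.symm (some y)) := by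
  classical
  have key : ∀ z w : T, e.symm (some z) = e.symm (some w) ↔ z = w := by
    intro z w
    constructor
    · intro hzw
      have := congrArg e hzw
      simpa using this
    · rintro rfl; rfl
  unfold jmp
  by_cases hd : D y = q
  · rw [if_pos hd, if_pos (by rw [← h y, key]; exact hd), ← h q]
  · rw [if_neg hd, if_neg (by rw [← h y, key]; exact hd), ← h y]

lemma jmp_comm {S : Type*} (g : S → S) (hg : Function.Injective g) (p q x : S)
    (hpq : p ≠ q) (hxp : x ≠ p) (hxq : x ≠ q) :
    jmp q (jmp p g) x = jmp p (jmp q g) x := by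
  classical
  unfold jmp
  by_cases h1 : g x = p
  · have h2 : g x ≠ q := h1 ▸ hpq
    have h3 : g q ≠ p := fun hh => hxq (hg (h1.trans hh.symm))
    simp [h1, h2, h3, hpq]
  · by_cases h2 : g x = q
    · have h4 : g p ≠ q := fun hh => hxp (hg (h2.trans hh.symm))
      simp [h1, h2, h4, hpq, Ne.symm hpq]
    · simp [h1, h2]

lemma succAbove_mk_mk {m : ℕ} {a b : ℕ} (ha : a < m + 1) (hb : b < m) :
    (⟨a, ha⟩ : Fin (m + 1)).succAbove ⟨b, hb⟩ =
      ⟨if b < a then b else b + 1, by split <;> omega⟩ := by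
  unfold Fin.succAbove
  have hiff : (Fin.castSucc ⟨b, hb⟩ < ⟨a, ha⟩) ↔ b < a := by
    simp [Fin.lt_def]
  split_ifs with hA hB hB
  · rfl
  · exact absurd (hiff.mp hA) hB
  · exact absurd (hiff.mpr hB) hA
  · rfl

lemma coface_comm {m : ℕ} (i j : ℕ) (hij : i < j) (_hjm : j ≤ m + 2)
    (h1 : j < m + 3) (h2 : i < m + 2) (h3 : i < m + 3) (h4 : j - 1 < m + 2) (k : Fin (m + 1)) :
    (⟨j, h1⟩ : Fin (m + 3)).succAbove ((⟨i, h2⟩ : Fin (m + 2)).succAbove k) =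
    (⟨i, h3⟩ : Fin (m + 3)).succAbove ((⟨j - 1, h4⟩ : Fin (m + 2)).succAbove k) := by
  obtain ⟨b, hb⟩ := k
  rw [succAbove_mk_mk, succAbove_mk_mk, succAbove_mk_mk, succAbove_mk_mk]
  apply Fin.ext
  simp only
  split_ifs <;> omega

lemma succAbove_big_small {m : ℕ} (i j : ℕ) (hij : i < j) (h1 : j < m + 3) (h2 : i < m + 2) :
    (⟨j, h1⟩ : Fin (m + 3)).succAbove ⟨i, h2⟩ = ⟨i, by omega⟩ := by
  rw [succAbove_mk_mk]
  apply Fin.ext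
  simp [hij]

lemma succAbove_small_big {m : ℕ} (i j : ℕ) (hij : i < j) (h1 : i < m + 3) (h2 : j - 1 < m + 2) :
    (⟨i, h1⟩ : Fin (m + 3)).succAbove ⟨j - 1, h2⟩ = ⟨j, by omega⟩ := by
  rw [succAbove_mk_mk]
  apply Fin.ext
  simp only
  split_ifs <;> omega


/-- For `n ≥ 2` (here `[n]` is realized as `Fin (n+3)` with `n ↦ n+2`),
a finite set `L`, a permutation `α` of `[n] ∪ L` and `0 ≤ i < j ≤ n`, the face maps satisfy
the semisimplicial identity `D_i (D_j α) = D_{j-1} (D_i α)`. -/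
theorem stmt_0 {L : Type} [Finite L] (n : ℕ) (α : Equiv.Perm (Fin (n + 3) ⊕ L))
    (i j : ℕ) (hij : i < j) (hj : j ≤ n + 2) :
    faceMap (⟨i, by omega⟩ : Fin (n + 2)) (faceMap (⟨j, by omega⟩ : Fin (n + 3)) α) =
      faceMap (⟨j - 1, by omega⟩ : Fin (n + 2)) (faceMap (⟨i, by omega⟩ : Fin (n + 3)) α) := by
  have hi2 : i < n + 2 := by omega
  have hi3 : i < n + 3 := by omega
  have hj3 : j < n + 3 := by omega
  have hj2 : j - 1 < n + 2 := by omega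
  set eAL := faceEquiv (n + 2) L ⟨j, hj3⟩ with heAL
  set eBL := faceEquiv (n + 1) L ⟨i, hi2⟩ with heBL
  set eAR := faceEquiv (n + 2) L ⟨i, hi3⟩ with heAR
  set eBR := faceEquiv (n + 1) L ⟨j - 1, hj2⟩ with heBR
  -- the two composite embeddings `Fin (n+1) ⊕ L → Fin (n+3) ⊕ L` agree
  have hE : ∀ y : Fin (n + 1) ⊕ L,
      eAL.symm (some (eBL.symm (some y))) = eAR.symm (some (eBR.symm (some y))) := by
    rintro (k | l)
    · rw [heAL, heBL, heAR, heBR, faceEquiv_symm_some_inl, faceEquiv_symm_some_inl,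
        faceEquiv_symm_some_inl, faceEquiv_symm_some_inl]
      exact congrArg Sum.inl (coface_comm i j hij hj hj3 hi2 hi3 hj2 k)
    · rw [heAL, heBL, heAR, heBR, faceEquiv_symm_some_inr, faceEquiv_symm_some_inr,
        faceEquiv_symm_some_inr, faceEquiv_symm_some_inr]
  have hinjL : Function.Injective
      (fun y : Fin (n + 1) ⊕ L => eAL.symm (some (eBL.symm (some y)))) := by
    intro a b hab
    have h1 := Option.some.inj (eAL.symm.injective hab)
    exact Option.some.inj (eBL.symm.injective h1)
  apply Equiv.ext
  intro x
  -- key points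
  have hQL : eAL.symm (some (eBL.symm none)) = Sum.inl (⟨i, hi3⟩ : Fin (n + 3)) := by
    rw [heBL, faceEquiv_symm_none, heAL, faceEquiv_symm_some_inl,
      succAbove_big_small i j hij hj3 hi2]
  have hQR : eAR.symm (some (eBR.symm none)) = Sum.inl (⟨j, hj3⟩ : Fin (n + 3)) := by
    rw [heBR, faceEquiv_symm_none, heAR, faceEquiv_symm_some_inl,
      succAbove_small_big i j hij hi3 hj2]
  have hPL : eAL.symm none = Sum.inl (⟨j, hj3⟩ : Fin (n + 3)) := by
    rw [heAL, faceEquiv_symm_none]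
  have hPR : eAR.symm none = Sum.inl (⟨i, hi3⟩ : Fin (n + 3)) := by
    rw [heAR, faceEquiv_symm_none]
  -- nonmembership / distinctness
  have hXP : eAL.symm (some (eBL.symm (some x))) ≠ eAL.symm none := by
    intro h
    simpa using eAL.symm.injective h
  have hXQ : eAL.symm (some (eBL.symm (some x))) ≠ eAL.symm (some (eBL.symm none)) := by
    intro h
    have h1 := Option.some.inj (eAL.symm.injective h)
    simpa using eBL.symm.injective h1
  have hPQ : eAL.symm none ≠ eAL.symm (some (eBL.symm none)) := by
    intro h
    simpa using eAL.symm.injective h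
  -- compute both embedded values
  have mainL : eAL.symm (some (eBL.symm (some
        (faceMap (⟨i, hi2⟩ : Fin (n + 2)) (faceMap (⟨j, hj3⟩ : Fin (n + 3)) α) x)))) =
      jmp (eAL.symm (some (eBL.symm none))) (jmp (eAL.symm none) ⇑α)
        (eAL.symm (some (eBL.symm (some x)))) := by
    rw [faceMap_spec]
    exact jmp_conj eAL (⇑(faceMap (⟨j, hj3⟩ : Fin (n + 3)) α)) (jmp (eAL.symm none) ⇑α)
      (fun y => faceMap_spec (⟨j, hj3⟩ : Fin (n + 3)) α y) _ _
  have mainR : eAR.symm (some (eBR.symm (some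
        (faceMap (⟨j - 1, hj2⟩ : Fin (n + 2)) (faceMap (⟨i, hi3⟩ : Fin (n + 3)) α) x)))) =
      jmp (eAR.symm (some (eBR.symm none))) (jmp (eAR.symm none) ⇑α)
        (eAR.symm (some (eBR.symm (some x)))) := by
    rw [faceMap_spec]
    exact jmp_conj eAR (⇑(faceMap (⟨i, hi3⟩ : Fin (n + 3)) α)) (jmp (eAR.symm none) ⇑α)
      (fun y => faceMap_spec (⟨i, hi3⟩ : Fin (n + 3)) α y) _ _
  have hswap : jmp (eAL.symm (some (eBL.symm none))) (jmp (eAL.symm none) ⇑α)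
        (eAL.symm (some (eBL.symm (some x)))) =
      jmp (eAL.symm none) (jmp (eAL.symm (some (eBL.symm none))) ⇑α)
        (eAL.symm (some (eBL.symm (some x)))) :=
    jmp_comm (⇑α) α.injective _ _ _ hPQ hXP hXQ
  have key : eAL.symm (some (eBL.symm (some
        (faceMap (⟨i, hi2⟩ : Fin (n + 2)) (faceMap (⟨j, hj3⟩ : Fin (n + 3)) α) x)))) =
      eAL.symm (some (eBL.symm (some
        (faceMap (⟨j - 1, hj2⟩ : Fin (n + 2)) (faceMap (⟨i, hi3⟩ : Fin (n + 3)) α) x)))) := by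
    rw [mainL, hswap, hPL, hQL, hE, hE, mainR, hPR, hQR]
  exact hinjL key
end

section
/- Let n ≥ 1, let L be a finite set, let α be a permutation of [n] ∪ L, and let 0 ≤ i ≤ n. Then the face map D_i commutes with taking inverses: D_i(α⁻¹) = (D_i(α))⁻¹. -/
/-- For `n ≥ 1` (here `[n]` is realized as `Fin (n+2)` with `n ↦ n+1`),
a finite set `L`, a permutation `α` of `[n] ∪ L` and `0 ≤ i ≤ n`, the face map `D_i`
commutes with taking inverses: `D_i (α⁻¹) = (D_i α)⁻¹`. -/
theorem stmt_1 {L : Type} [Finite L] (n : ℕ) (α : Equiv.Perm (Fin (n + 2) ⊕ L))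
    (i : Fin (n + 2)) :
    faceMap i α⁻¹ = (faceMap i α)⁻¹ := by
  show _ = (Equiv.removeNone _).symm
  rw [Equiv.removeNone_symm]
  rfl
end

section
/- Let n ≥ 1, let L be a finite set, let α be a permutation of [n] ∪ L, let σ ∈ Symm(L) be extended to a permutation of [n] ∪ L by the identity on [n], and let 0 ≤ i ≤ n. Then D_i(σ⁻¹ ∘ α ∘ σ) = σ⁻¹ ∘ D_i(α) ∘ σ; consequently D_i descends to a well-defined map on the sets of Symm(L)-conjugacy orbits Tymm([n] ∪ L) → Tymm([n−1] ∪ L). -/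
/-- The extension of a permutation `σ` of `L` to a permutation of `[n] ∪ L`
(here `Fin n ⊕ L`) which is the identity on `[n]`. -/
def extendPerm (n : ℕ) {L : Type*} (σ : Equiv.Perm L) : Equiv.Perm (Fin n ⊕ L) :=
  Equiv.sumCongr (Equiv.refl (Fin n)) σ

section Aux
variable {α β : Type*}

theorem removeNone_trans_left (g : Equiv.Perm α) (e : Option α ≃ Option β) :
    Equiv.removeNone (g.optionCongr.trans e) = (g : α ≃ α).trans (Equiv.removeNone e) := by
  ext x
  apply Option.some_injective
  show (Equiv.removeNone (g.optionCongr.trans e) x : Option β) = some (Equiv.removeNone e (g x))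
  rcases h : e (some (g x)) with _ | y
  · rw [Equiv.removeNone_none _ (show (g.optionCongr.trans e) (some x) = none by simpa using h),
        Equiv.removeNone_none _ h]
    simp
  · rw [Equiv.removeNone_some _ ⟨y, show (g.optionCongr.trans e) (some x) = some y by simpa using h⟩,
        Equiv.removeNone_some _ ⟨y, h⟩]
    simp [h]

theorem removeNone_trans_right (e : Option α ≃ Option β) (h : Equiv.Perm β) :
    Equiv.removeNone (e.trans h.optionCongr) = (Equiv.removeNone e).trans (h : β ≃ β) := by
  ext x
  apply Option.some_injective
  show (Equiv.removeNone (e.trans h.optionCongr) x : Option β) = some (h (Equiv.removeNone e x))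
  rcases hx : e (some x) with _ | y
  · rw [Equiv.removeNone_none _ (show (e.trans h.optionCongr) (some x) = none by simp [hx])]
    have := Equiv.removeNone_none e hx
    simp only [Equiv.trans_apply]
    rw [← this]
    simp
  · have hy : (e.trans h.optionCongr) (some x) = some (h y) := by
      simp only [Equiv.trans_apply, hx]
      rfl
    rw [Equiv.removeNone_some _ ⟨h y, hy⟩, hy]
    have := Equiv.removeNone_some e ⟨y, hx⟩
    rw [hx] at this
    rw [Option.some_inj.mp this]
end Aux

theorem faceEquiv_extendPerm {L : Type*} (n : ℕ) (i : Fin (n + 1)) (σ : Equiv.Perm L)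
    (x : Fin (n + 1) ⊕ L) :
    faceEquiv n L i (extendPerm (n + 1) σ x) =
      (extendPerm n σ).optionCongr (faceEquiv n L i x) := by
  rcases x with j | b
  · have : extendPerm (n + 1) σ (Sum.inl j) = Sum.inl j := rfl
    rw [this]
    show (optionSumEquiv (Fin n) L) (Sum.inl (finSuccEquiv' i j)) = _
    rcases h : finSuccEquiv' i j with _ | k <;>
      simp [faceEquiv, optionSumEquiv, h, extendPerm]
  · simp [faceEquiv, optionSumEquiv, extendPerm]

theorem extendPerm_inv {L : Type*} (n : ℕ) (σ : Equiv.Perm L) :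
    (extendPerm n σ)⁻¹ = extendPerm n σ⁻¹ := by
  ext x <;> rcases x with j | b <;> rfl

theorem faceMap_conj {L : Type*} (n : ℕ) (α : Equiv.Perm (Fin (n + 2) ⊕ L))
    (σ : Equiv.Perm L) (i : Fin (n + 2)) :
    faceMap i ((extendPerm (n + 2) σ)⁻¹ * α * extendPerm (n + 2) σ) =
      (extendPerm (n + 1) σ)⁻¹ * faceMap i α * extendPerm (n + 1) σ := by
  set E := faceEquiv (n + 1) L i with hE
  have p1 : ∀ x, E (extendPerm (n + 2) σ x) = (extendPerm (n + 1) σ).optionCongr (E x) :=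
    faceEquiv_extendPerm (n + 1) i σ
  have p2 : ∀ x, E ((extendPerm (n + 2) σ)⁻¹ x) = ((extendPerm (n + 1) σ)⁻¹).optionCongr (E x) := by
    intro x
    rw [extendPerm_inv, extendPerm_inv]
    exact faceEquiv_extendPerm (n + 1) i σ⁻¹ x
  have key : (E.symm.trans (((extendPerm (n + 2) σ)⁻¹ * α * extendPerm (n + 2) σ :
        Equiv.Perm (Fin (n + 2) ⊕ L)) : (Fin (n + 2) ⊕ L) ≃ (Fin (n + 2) ⊕ L))).trans E =
      ((extendPerm (n + 1) σ).optionCongr.trans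
        ((E.symm.trans (α : (Fin (n + 2) ⊕ L) ≃ (Fin (n + 2) ⊕ L))).trans E)).trans
        ((extendPerm (n + 1) σ)⁻¹).optionCongr := by
    ext x
    simp only [Equiv.trans_apply, Equiv.Perm.mul_apply]
    rw [p2]
    congr 2
    have := p1 (E.symm ((extendPerm (n + 1) σ).optionCongr x))
    have h2 : E.symm ((extendPerm (n + 1) σ).optionCongr x) =
        extendPerm (n + 2) σ (E.symm x) := by
      apply E.injective
      rw [p1, Equiv.apply_symm_apply, Equiv.apply_symm_apply]
    rw [h2]
  show Equiv.removeNone _ = _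
  rw [key, Equiv.trans_assoc, removeNone_trans_left, removeNone_trans_right]
  ext x
  rfl

/-- For `n ≥ 1` (here `[n]` is realized as `Fin (n+2)` with `n ↦ n+1`),
a finite set `L`, a permutation `α` of `[n] ∪ L`, `σ ∈ Symm(L)` extended by the identity
on `[n]`, and `0 ≤ i ≤ n`, one has `D_i (σ⁻¹ ∘ α ∘ σ) = σ⁻¹ ∘ D_i(α) ∘ σ`; consequently
`D_i` descends to a well-defined map on the sets of `Symm(L)`-conjugacy orbits. -/
theorem stmt_2 {L : Type} [Finite L] (n : ℕ) (α : Equiv.Perm (Fin (n + 2) ⊕ L))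
    (σ : Equiv.Perm L) (i : Fin (n + 2)) :
    faceMap i ((extendPerm (n + 2) σ)⁻¹ * α * extendPerm (n + 2) σ) =
      (extendPerm (n + 1) σ)⁻¹ * faceMap i α * extendPerm (n + 1) σ ∧
    ∀ β : Equiv.Perm (Fin (n + 2) ⊕ L),
      (∃ τ : Equiv.Perm L, β = (extendPerm (n + 2) τ)⁻¹ * α * extendPerm (n + 2) τ) →
      ∃ τ' : Equiv.Perm L,
        faceMap i β = (extendPerm (n + 1) τ')⁻¹ * faceMap i α * extendPerm (n + 1) τ' := by
  refine ⟨faceMap_conj n α σ i, ?_⟩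
  rintro β ⟨τ, rfl⟩
  exact ⟨τ, faceMap_conj n α τ i⟩
end

section
/- Let n ≥ 1, let L be a finite set, let ρ be a permutation of [n] ∪ L, and let 0 ≤ i ≤ j ≤ n be such that every element of {i, i+1, …, j} is a fixed point of ρ. Then all the corresponding faces agree: D_i(ρ) = D_{i+1}(ρ) = … = D_j(ρ). (This is the key step showing that all faces taken along a fan of a Sullivan diagram coincide.) -/
/-!
The identification `faceEquiv` used for `D_{k+1}` is the one used for `D_k` precomposed with the
transposition `(k k+1)`. When `ρ` fixes both `k` and `k+1` it commutes with that transposition,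
so conjugating `ρ` by either identification gives the same permutation and `D_{k+1}(ρ) = D_k(ρ)`.
Induction along `i, i+1, …, j` finishes the proof.
-/

open Equiv

theorem finSuccEquiv'_succ {n : ℕ} (i : Fin n) :
    finSuccEquiv' i.succ = (swap i.castSucc i.succ).trans (finSuccEquiv' i.castSucc) := by
  refine symm_bijective.injective ?_
  ext (_ | t) : 1
  · simp
  · simp only [finSuccEquiv'_symm_some, symm_trans_apply, symm_swap]
    rcases lt_trichotomy t i with h | rfl | h
    · rw [Fin.succAbove_succ_of_le _ _ h.le, Fin.succAbove_castSucc_of_lt _ _ h,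
        swap_apply_of_ne_of_ne (by simpa using h.ne) (Fin.castSucc_lt_succ_iff.2 h.le).ne]
    · simp
    · rw [Fin.succAbove_succ_of_lt _ _ h, Fin.succAbove_castSucc_of_le _ _ h.le,
        swap_apply_of_ne_of_ne (Fin.castSucc_lt_succ_iff.2 h.le).ne' (by simpa using h.ne')]

theorem faceEquiv_succ {n : ℕ} {L : Type*} [DecidableEq L] (i : Fin n) :
    faceEquiv n L i.succ
      = (swap (Sum.inl i.castSucc) (Sum.inl i.succ)).trans (faceEquiv n L i.castSucc) := by
  rw [faceEquiv, faceEquiv, finSuccEquiv'_succ, ← Perm.sumCongr_swap_refl, ← trans_assoc,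
    Perm.sumCongr, sumCongr_trans, refl_trans]

theorem Equiv.Perm.commute_swap_of_apply_eq {α : Type*} [DecidableEq α] {ρ : Perm α} {x y : α}
    (hx : ρ x = x) (hy : ρ y = y) : Commute (swap x y) ρ := by
  have := mul_swap_eq_swap_mul ρ x y
  rw [hx, hy] at this
  exact this.symm

theorem Equiv.permCongr_trans_of_commute {α β : Type*} (e : α ≃ β) {σ ρ : Perm α}
    (h : Commute σ ρ) : (σ.trans e).permCongr ρ = e.permCongr ρ := by
  ext x
  simp only [permCongr_apply, symm_trans_apply, trans_apply]
  rw [← Perm.mul_apply, h.eq, Perm.mul_apply, apply_symm_apply]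

theorem faceMap_succ_eq_faceMap_castSucc {n : ℕ} {L : Type*} [DecidableEq L] (i : Fin n)
    (ρ : Perm (Fin (n + 1) ⊕ L)) (h₀ : ρ (Sum.inl i.castSucc) = Sum.inl i.castSucc)
    (h₁ : ρ (Sum.inl i.succ) = Sum.inl i.succ) :
    faceMap i.succ ρ = faceMap i.castSucc ρ := by
  change removeNone ((faceEquiv n L i.succ).permCongr ρ)
    = removeNone ((faceEquiv n L i.castSucc).permCongr ρ)
  rw [faceEquiv_succ, permCongr_trans_of_commute _ (Perm.commute_swap_of_apply_eq h₀ h₁)]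

/-- For `n ≥ 1` (here `[n]` is realized as `Fin (n+2)` with `n ↦ n+1`),
a finite set `L`, a permutation `ρ` of `[n] ∪ L`, and `0 ≤ i ≤ j ≤ n` such that every
element of `{i, i+1, …, j}` is a fixed point of `ρ`, all the corresponding faces agree:
`D_i(ρ) = D_{i+1}(ρ) = … = D_j(ρ)`. -/
theorem stmt_4 {L : Type} (n : ℕ) (ρ : Equiv.Perm (Fin (n + 2) ⊕ L))
    (i j : ℕ) (hij : i ≤ j) (hj : j ≤ n + 1)
    (hfix : ∀ (k : ℕ) (hik : i ≤ k) (hkj : k ≤ j),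
      ρ (Sum.inl (⟨k, by omega⟩ : Fin (n + 2))) = Sum.inl (⟨k, by omega⟩ : Fin (n + 2))) :
    ∀ (k : ℕ) (hik : i ≤ k) (hkj : k ≤ j),
      faceMap (⟨k, by omega⟩ : Fin (n + 2)) ρ = faceMap (⟨i, by omega⟩ : Fin (n + 2)) ρ := by
  classical
  intro k hik
  induction k, hik using Nat.le_induction with
  | base => intro _; rfl
  | succ k hik ih =>
    intro hkj
    rw [← ih (by omega)]
    exact faceMap_succ_eq_faceMap_castSucc (⟨k, by omega⟩ : Fin (n + 1)) ρ
      (hfix k hik (by omega)) (hfix (k + 1) (by omega) hkj)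
end

section
/- Let n ≥ 1 and let ρ be a permutation of [n] (so L = ∅). Let l ≥ 1 and 0 ≤ i with i + l − 1 ≤ n be such that every element of {i, i+1, …, i+l−1} is a fixed point of ρ, and such that this run of fixed points is maximal: either i = 0 or ρ(i−1) ≠ i−1, and either i+l−1 = n or ρ(i+l) ≠ i+l. Then for every k ∈ [n] with k ∉ {i, …, i+l−1} one has D_k(ρ) ≠ D_i(ρ). (This is the key step showing that faces of a Sullivan diagram taken outside a maximal fan differ from the faces taken at the fan.) -/
lemma faceMap_apply_of {n : ℕ} {L : Type*} (i : Fin (n+1)) (ρ : Equiv.Perm (Fin (n+1) ⊕ L))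
    (x y : Fin n) (h : ρ (Sum.inl (i.succAbove x)) = Sum.inl (i.succAbove y)) :
    faceMap i ρ (Sum.inl x) = Sum.inl y := by
  have key : (((faceEquiv n L i).symm.trans ρ).trans (faceEquiv n L i)) (some (Sum.inl x))
      = some (Sum.inl y) := by
    simp [faceEquiv, optionSumEquiv, finSuccEquiv'_symm_some, h, finSuccEquiv'_succAbove]
  have h2 := Equiv.removeNone_some _ ⟨_, key⟩
  rw [key] at h2
  exact Option.some_injective _ h2

lemma faceMap_fixed {n : ℕ} (i : Fin (n+1)) (ρ : Equiv.Perm (Fin (n+1) ⊕ Empty))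
    (hi : ρ (Sum.inl i) = Sum.inl i) (x : Fin n)
    (h : faceMap i ρ (Sum.inl x) = Sum.inl x) :
    ρ (Sum.inl (i.succAbove x)) = Sum.inl (i.succAbove x) := by
  rcases h' : ρ (Sum.inl (i.succAbove x)) with m | e
  · have hm : m ≠ i := by
      intro e
      apply Fin.succAbove_ne i x
      apply Sum.inl_injective
      apply ρ.injective
      rw [h', e, hi]
    obtain ⟨y, rfl⟩ := Fin.exists_succAbove_eq hm
    have := faceMap_apply_of i ρ x y h'
    rw [h] at this
    rw [Sum.inl.injEq] at this
    rw [this]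
  · exact e.elim

set_option maxHeartbeats 1600000

/-- For `n ≥ 1` (here `[n]` is realized as `Fin (n+2)` with `n ↦ n+1`)
and `L = ∅` (realized as `Empty`), let `ρ` be a permutation of `[n]`, and let `l ≥ 1`,
`0 ≤ i` with `i + l - 1 ≤ n` be such that every element of `{i, …, i+l-1}` is a fixed point
of `ρ`, and this run is maximal: either `i = 0` or `ρ(i-1) ≠ i-1`, and either
`i + l - 1 = n` or `ρ(i+l) ≠ i+l`. Then for every `k ∈ [n]` with `k ∉ {i, …, i+l-1}`
one has `D_k(ρ) ≠ D_i(ρ)`. -/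
theorem stmt_6 (n : ℕ) (ρ : Equiv.Perm (Fin (n + 2) ⊕ Empty))
    (i l : ℕ) (hl : 1 ≤ l) (hil : i + l - 1 ≤ n + 1)
    (hfix : ∀ (k : ℕ) (hik : i ≤ k) (hkj : k ≤ i + l - 1),
      ρ (Sum.inl (⟨k, by omega⟩ : Fin (n + 2))) = Sum.inl (⟨k, by omega⟩ : Fin (n + 2)))
    (hmax_left : ∀ hi : 1 ≤ i,
      ρ (Sum.inl (⟨i - 1, by omega⟩ : Fin (n + 2))) ≠ Sum.inl (⟨i - 1, by omega⟩ : Fin (n + 2)))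
    (hmax_right : ∀ hil' : i + l ≤ n + 1,
      ρ (Sum.inl (⟨i + l, by omega⟩ : Fin (n + 2))) ≠
        Sum.inl (⟨i + l, by omega⟩ : Fin (n + 2))) :
    ∀ (k : ℕ) (hk : k ≤ n + 1), ¬(i ≤ k ∧ k ≤ i + l - 1) →
      faceMap (⟨k, by omega⟩ : Fin (n + 2)) ρ ≠ faceMap (⟨i, by omega⟩ : Fin (n + 2)) ρ := by
  intro k hk hnot heq
  have hii : i ≤ i + l - 1 := by omega
  have hfixi : ρ (Sum.inl (⟨i, by omega⟩ : Fin (n + 2))) = Sum.inl (⟨i, by omega⟩ : Fin (n + 2)) :=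
    hfix i le_rfl hii
  by_cases hki : k < i
  · -- case k < i : witness j = i - 1
    have hi1 : 1 ≤ i := by omega
    set j : Fin (n + 1) := ⟨i - 1, by omega⟩ with hj
    have hsA : (⟨k, by omega⟩ : Fin (n + 2)).succAbove j = ⟨i, by omega⟩ := by
      rw [Fin.succAbove_of_le_castSucc]
      · ext; simp [hj]; omega
      · simp [Fin.le_def, hj]; omega
    have hlt : Fin.castSucc j < (⟨i, by omega⟩ : Fin (n + 2)) := by
      simp [Fin.lt_def, hj]; omega
    have hsB : (⟨i, by omega⟩ : Fin (n + 2)).succAbove j = ⟨i - 1, by omega⟩ :=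
      (Fin.succAbove_of_castSucc_lt _ _ hlt).trans (by ext; simp [hj])
    have h1 : faceMap (⟨k, by omega⟩ : Fin (n + 2)) ρ (Sum.inl j) = Sum.inl j :=
      faceMap_apply_of _ ρ j j (by rw [hsA]; exact hfixi)
    rw [heq] at h1
    have h2 := faceMap_fixed _ ρ hfixi j h1
    rw [hsB] at h2
    exact hmax_left hi1 h2
  · -- case k ≥ i + l : witness j = i + l - 1
    have hkl : i + l ≤ k := by omega
    set j : Fin (n + 1) := ⟨i + l - 1, by omega⟩ with hj
    have hsA : (⟨k, by omega⟩ : Fin (n + 2)).succAbove j = ⟨i + l - 1, by omega⟩ := by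
      rw [Fin.succAbove_of_castSucc_lt]
      · ext; simp [hj]
      · simp [Fin.lt_def, hj]; omega
    have hsB : (⟨i, by omega⟩ : Fin (n + 2)).succAbove j = ⟨i + l, by omega⟩ := by
      rw [Fin.succAbove_of_le_castSucc]
      · ext; simp [hj]; omega
      · simp [Fin.le_def, hj]; omega
    have h1 : faceMap (⟨k, by omega⟩ : Fin (n + 2)) ρ (Sum.inl j) = Sum.inl j :=
      faceMap_apply_of _ ρ j j (by rw [hsA]; exact hfix (i + l - 1) (by omega) le_rfl)
    rw [heq] at h1
    have h2 := faceMap_fixed _ ρ hfixi j h1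
    rw [hsB] at h2
    exact hmax_right (by omega) h2
end

section
/- Fix an integer k ≥ 1 (the number of words) and let n ≥ 0. Then the union J_n = ⋃_{j=1}^n α_{j,n}⁻¹(I_j) is a disjoint union, and the set of sentences A_n decomposes as the disjoint union A_n = B_n ⊔ ⨆_{1 ≤ j ≤ n, 1 ≤ i ≤ k} α_{j,n}⁻¹(image(f_{j−1}^i)); equivalently, for every sentence T ∈ A_n with T ∉ B_n there exist unique j ∈ {1,…,n} and i ∈ {1,…,k} and a unique T' ∈ B_{j−1} with α_{j,n}(T) = f_{j−1}^i(T'). -/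
/-!
The letter `m + 1` inserted by `f_m^i` is erased by every `α_j` with `j ≤ m`: either it sits
next to a placeholder and fuses away, or it stood at the left end of a placeholder-free word and
leaves there a single placeholder that fuses with nothing. So `α_j (f_m^i T)` is `α_j T` up to such
a left-end placeholder in one word, and membership in `I_j` is blind to it (strong induction on `j`:
`f_{j-1}^i` commutes with adding the placeholder, and every `α` either keeps or absorbs it). Hence
`α_j (f_m^i T) ∉ I_j` for `T ∈ B_m` and `1 ≤ j ≤ m`, and since `α_j ∘ α_{j'} = α_j` for `j ≤ j'`,
at most one level `j` has `α_j S ∈ I_j`. At that level `(i, T')` is unique because `f_{j-1}^i` is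
injective and the new letter `j` shows which word it went into.
-/

/-- A word: a finite sequence of letters (`some a` for a positive integer `a`) and
placeholders (`none` for `ε`), written left to right (and read right to left). -/
abbrev Word : Type := List (Option ℕ+)

/-- A word is reduced if it has no two consecutive placeholders. -/
def WordReduced (w : Word) : Prop :=
  List.Chain' (fun a b => ¬(a = none ∧ b = none)) w

/-- Reduce a word by fusing consecutive placeholders `εε` into a single `ε`. -/
def reduceWord : Word → Word
  | [] => []
  | [a] => [a]
  | none :: none :: rest => reduceWord (none :: rest)
  | a :: b :: rest => a :: reduceWord (b :: rest)

/-- The map `α_{m,·}` on words: replace each letter larger than `m` by the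
placeholder `ε`, then reduce. -/
def alphaWord (m : ℕ) (w : Word) : Word :=
  reduceWord (w.map fun a =>
    match a with
    | none => none
    | some x => if (x : ℕ) ≤ m then some x else none)

/-- Auxiliary insertion, acting on the reversed (reading-order) word: insert the
letter `x` immediately before the first placeholder, or at the very end if there
is no placeholder. -/
def insertAux (x : ℕ+) : List (Option ℕ+) → List (Option ℕ+)
  | [] => [some x]
  | none :: rest => some x :: none :: rest
  | a :: rest => a :: insertAux x rest

/-- Insert the letter `x` into a word: immediately to the right of the rightmost
placeholder if the word contains one, and at the left end otherwise. -/
def insertLetter (x : ℕ+) (w : Word) : Word :=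
  (insertAux x w.reverse).reverse

/-- A sentence of `k` words. -/
abbrev Sentence (k : ℕ) := Fin k → Word

/-- Membership in `A_n`: all `k` words are reduced, each of the letters `1, …, n`
occurs exactly once in the sentence, and no other letter occurs. -/
def InA (k n : ℕ) (S : Sentence k) : Prop :=
  (∀ i, WordReduced (S i)) ∧
    ∀ a : ℕ+, (∑ i : Fin k, (S i).count (some a)) = if (a : ℕ) ≤ n then 1 else 0

/-- The underlying map of `f_n^i` on sentences: insert the letter `n+1` into the
`i`-th word (to the right of the rightmost placeholder, or at the left end). -/
def finsert (k n : ℕ) (i : Fin k) (S : Sentence k) : Sentence k :=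
  Function.update S i (insertLetter ⟨n + 1, Nat.succ_pos n⟩ (S i))

/-- The map `α_{m,·}` on sentences. -/
def alphaS (k m : ℕ) (S : Sentence k) : Sentence k := fun i => alphaWord m (S i)

/-- The sets `I_n`: `I_0 = ∅` and `I_{n+1} = ⋃_{i} image (f_n^i restricted to B_n)`,
where `B_n = A_n - ⋃_{1 ≤ j ≤ n} α_{j,n}⁻¹(I_j)` (inlined below). -/
def Iset (k : ℕ) : ℕ → Set (Sentence k)
  | 0 => ∅
  | n + 1 =>
    {S | ∃ i : Fin k, ∃ T : Sentence k,
      ((InA k n T ∧ ∀ (j : ℕ) (_hj1 : 1 ≤ j) (_hj2 : j ≤ n), alphaS k j T ∉ Iset k j) ∧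
        S = finsert k n i T)}
  termination_by n => n
  decreasing_by omega

/-- The set `B_n = A_n - J_n`. -/
def Bset (k n : ℕ) : Set (Sentence k) :=
  {S | InA k n S ∧ ∀ (j : ℕ) (_hj1 : 1 ≤ j) (_hj2 : j ≤ n), alphaS k j S ∉ Iset k j}

/-- The set `J_n = ⋃_{1 ≤ j ≤ n} α_{j,n}⁻¹(I_j) ⊆ A_n`. -/
def Jset (k n : ℕ) : Set (Sentence k) :=
  {S | InA k n S ∧ ∃ j : ℕ, 1 ≤ j ∧ j ≤ n ∧ alphaS k j S ∈ Iset k j}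

theorem reduceWord_cons (x : Option ℕ+) (l : Word) :
    reduceWord (x :: l) =
      if x = none ∧ l.head? = some none then reduceWord l else x :: reduceWord l := by
  match x, l with
  | x, [] => cases x <;> rfl
  | none, none :: r => rfl
  | none, some b :: r => rfl
  | some a, b :: r => cases b <;> rfl

theorem reduceWord_head? (l : Word) : (reduceWord l).head? = l.head? := by
  induction l with
  | nil => rfl
  | cons x l ih =>
    rw [reduceWord_cons]
    split_ifs with h
    · rw [ih, h.2, h.1]; rfl
    · rfl

theorem reduceWord_append_none_none (u v : Word) :
    reduceWord (u ++ none :: none :: v) = reduceWord (u ++ none :: v) := by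
  induction u with
  | nil => rfl
  | cons c u ih =>
    rw [List.cons_append, List.cons_append, reduceWord_cons, reduceWord_cons, ih]
    cases u <;> simp

theorem reduceWord_map_reduceWord {g : Option ℕ+ → Option ℕ+} (hg : g none = none) (l : Word) :
    reduceWord ((reduceWord l).map g) = reduceWord (l.map g) := by
  induction l with
  | nil => rfl
  | cons x l ih =>
    rw [reduceWord_cons]
    split_ifs with h
    · rw [ih, List.map_cons, reduceWord_cons, if_pos]
      rw [h.1, List.head?_map, h.2]
      exact ⟨hg, by simp [hg]⟩
    · rw [List.map_cons, List.map_cons, reduceWord_cons, reduceWord_cons, List.head?_map,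
        List.head?_map, reduceWord_head?, ih]

theorem insertAux_ne_nil (x : ℕ+) (l : Word) : insertAux x l ≠ [] := by
  rcases l with _ | ⟨_ | a, r⟩ <;> simp [insertAux]

theorem insertAux_ne_none_cons (x : ℕ+) (l r : Word) : insertAux x l ≠ none :: r := by
  rcases l with _ | ⟨_ | a, r⟩ <;> simp [insertAux]

theorem insertAux_injective (x : ℕ+) : Function.Injective (insertAux x) := by
  intro l₁ l₂ h
  induction l₁ generalizing l₂ with
  | nil =>
    rcases l₂ with _ | ⟨_ | b, r⟩ <;> simp_all [insertAux, (insertAux_ne_nil x _).symm]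
  | cons a l ih =>
    rcases a with _ | a <;> rcases l₂ with _ | ⟨_ | b, r⟩ <;>
      simp [insertAux, insertAux_ne_nil, insertAux_ne_none_cons,
        (insertAux_ne_none_cons x _ _).symm] at h ⊢
    · exact h
    · exact ⟨h.1, ih h.2⟩

theorem insertAux_of_none_notMem (x : ℕ+) {l : Word} (hl : none ∉ l) :
    insertAux x l = l ++ [some x] := by
  induction l with
  | nil => rfl
  | cons a r ih =>
    rcases a with _ | a
    · simp at hl
    · simp only [insertAux, List.cons_append, ih (by simpa using hl)]

theorem insertAux_append_none_cons (x : ℕ+) {l : Word} (hl : none ∉ l) (r : Word) :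
    insertAux x (l ++ none :: r) = l ++ some x :: none :: r := by
  induction l with
  | nil => rfl
  | cons a l ih =>
    rcases a with _ | a
    · simp at hl
    · simp only [List.cons_append, insertAux, ih (by simpa using hl)]

theorem insertLetter_of_none_notMem (x : ℕ+) {w : Word} (hw : none ∉ w) :
    insertLetter x w = some x :: w := by
  simp [insertLetter, insertAux_of_none_notMem x (l := w.reverse) (by simpa using hw)]

theorem insertLetter_append_none_cons (x : ℕ+) (u : Word) {v : Word} (hv : none ∉ v) :
    insertLetter x (u ++ none :: v) = u ++ none :: some x :: v := by
  simp [insertLetter, insertAux_append_none_cons x (l := v.reverse) (by simpa using hv)]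

theorem exists_eq_append_none_cons {w : Word} (hw : none ∈ w) :
    ∃ u v, w = u ++ none :: v ∧ none ∉ v := by
  induction w with
  | nil => simp at hw
  | cons a w ih =>
    by_cases hnw : none ∈ w
    · obtain ⟨u, v, rfl, hv⟩ := ih hnw
      exact ⟨a :: u, v, rfl, hv⟩
    · obtain rfl : a = none := by simpa [hnw, eq_comm] using hw
      exact ⟨[], w, rfl, hnw⟩

theorem insertLetter_none_cons (x : ℕ+) (w : Word) :
    insertLetter x (none :: w) = none :: insertLetter x w := by
  by_cases hw : none ∈ w
  · obtain ⟨u, v, rfl, hv⟩ := exists_eq_append_none_cons hw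
    rw [← List.cons_append, insertLetter_append_none_cons x _ hv,
      insertLetter_append_none_cons x _ hv, List.cons_append]
  · rw [insertLetter_of_none_notMem x hw, ← List.nil_append (none :: w),
      insertLetter_append_none_cons x _ hw, List.nil_append]

theorem insertLetter_injective (x : ℕ+) : Function.Injective (insertLetter x) :=
  List.reverse_injective.comp ((insertAux_injective x).comp List.reverse_injective)

theorem some_mem_insertLetter (x : ℕ+) (w : Word) : some x ∈ insertLetter x w := by
  by_cases hw : none ∈ w
  · obtain ⟨u, v, rfl, hv⟩ := exists_eq_append_none_cons hw
    simp [insertLetter_append_none_cons x u hv]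
  · simp [insertLetter_of_none_notMem x hw]

theorem head?_insertLetter_eq_some_none_iff (x : ℕ+) (w : Word) :
    (insertLetter x w).head? = some none ↔ w.head? = some none := by
  by_cases hw : none ∈ w
  · obtain ⟨u, v, rfl, hv⟩ := exists_eq_append_none_cons hw
    rw [insertLetter_append_none_cons x u hv]
    cases u <;> simp
  · rw [insertLetter_of_none_notMem x hw]
    simp only [List.head?_cons, Option.some.injEq, reduceCtorEq, false_iff]
    exact fun h => hw (List.mem_of_mem_head? h)

def truncLetter (m : ℕ) : Option ℕ+ → Option ℕ+
  | none => none
  | some x => if (x : ℕ) ≤ m then some x else none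

theorem truncLetter_none (m : ℕ) : truncLetter m none = none := rfl

theorem alphaWord_eq_reduceWord_map (m : ℕ) (w : Word) :
    alphaWord m w = reduceWord (w.map (truncLetter m)) := rfl

theorem truncLetter_comp_truncLetter {j j' : ℕ} (h : j ≤ j') :
    truncLetter j ∘ truncLetter j' = truncLetter j := by
  funext a
  rcases a with _ | x
  · rfl
  · by_cases hx : (x : ℕ) ≤ j' <;> simp [truncLetter, hx]
    omega

theorem alphaWord_alphaWord {j j' : ℕ} (h : j ≤ j') (w : Word) :
    alphaWord j (alphaWord j' w) = alphaWord j w := by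
  simp only [alphaWord_eq_reduceWord_map, reduceWord_map_reduceWord (truncLetter_none j),
    List.map_map, truncLetter_comp_truncLetter h]

def EqOrConsPlaceholder (u v : Word) : Prop :=
  u = v ∨ (v.head? ≠ some none ∧ u = none :: v)

theorem alphaWord_none_cons (j : ℕ) (w : Word) :
    EqOrConsPlaceholder (alphaWord j (none :: w)) (alphaWord j w) := by
  rw [alphaWord_eq_reduceWord_map, alphaWord_eq_reduceWord_map, List.map_cons, truncLetter_none,
    reduceWord_cons]
  split_ifs with h
  · exact .inl rfl
  · exact .inr ⟨by simpa [reduceWord_head?] using h, rfl⟩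

theorem alphaWord_insertLetter {j : ℕ} {x : ℕ+} (hx : j < x) (w : Word) :
    EqOrConsPlaceholder (alphaWord j (insertLetter x w)) (alphaWord j w) := by
  have hxj : truncLetter j (some x) = none := by simp [truncLetter, hx]
  by_cases hw : none ∈ w
  · obtain ⟨u, v, rfl, hv⟩ := exists_eq_append_none_cons hw
    left
    simp only [insertLetter_append_none_cons x u hv, alphaWord_eq_reduceWord_map, List.map_append,
      List.map_cons, hxj, truncLetter_none]
    exact reduceWord_append_none_none _ _
  · have : alphaWord j (some x :: w) = alphaWord j (none :: w) := by
      simp only [alphaWord_eq_reduceWord_map, List.map_cons, hxj, truncLetter_none]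
    rw [insertLetter_of_none_notMem x hw, this]
    exact alphaWord_none_cons j w

theorem wordReduced_none_cons_iff (w : Word) :
    WordReduced (none :: w) ↔ WordReduced w ∧ w.head? ≠ some none := by
  show List.IsChain _ _ ↔ List.IsChain _ _ ∧ _
  rw [List.isChain_cons, and_comm]
  refine and_congr_right' ⟨fun h hw => h none hw ⟨rfl, rfl⟩, ?_⟩
  rintro h _ hy ⟨-, rfl⟩
  exact h hy

section Sentence

variable {k : ℕ}

def consPlaceholder (i : Fin k) (S : Sentence k) : Sentence k :=
  Function.update S i (none :: S i)

theorem consPlaceholder_injective (i : Fin k) : Function.Injective (consPlaceholder i) := by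
  intro S T h
  funext l
  have hl := congrFun h l
  by_cases hli : l = i
  · subst hli
    simpa [consPlaceholder] using hl
  · simpa [consPlaceholder, hli] using hl

theorem inA_consPlaceholder_iff {m : ℕ} {i : Fin k} {S : Sentence k} :
    InA k m (consPlaceholder i S) ↔ InA k m S ∧ (S i).head? ≠ some none := by
  have hcount (a : ℕ+) :
      ∑ l, (consPlaceholder i S l).count (some a) = ∑ l, (S l).count (some a) :=
    Finset.sum_congr rfl fun l _ => by by_cases hl : l = i <;> simp [consPlaceholder, hl]
  have hreduced : (∀ l, WordReduced (consPlaceholder i S l)) ↔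
      (∀ l, WordReduced (S l)) ∧ (S i).head? ≠ some none := by
    simp only [consPlaceholder, Function.forall_update_iff, wordReduced_none_cons_iff]
    exact ⟨fun ⟨⟨hi, hh⟩, h⟩ => ⟨fun l => if hl : l = i then hl ▸ hi else h l hl, hh⟩,
      fun ⟨h, hh⟩ => ⟨⟨h i, hh⟩, fun l _ => h l⟩⟩
  simp only [InA, hcount, hreduced]
  tauto

theorem finsert_eq_update (m : ℕ) (i : Fin k) (T : Sentence k) :
    finsert k m i T = Function.update T i (insertLetter m.succPNat (T i)) := rfl

theorem finsert_consPlaceholder (m : ℕ) (i i' : Fin k) (T : Sentence k) :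
    finsert k m i' (consPlaceholder i T) = consPlaceholder i (finsert k m i' T) := by
  funext l
  by_cases hl : l = i <;> by_cases hl' : l = i' <;> subst_vars <;>
    simp [finsert_eq_update, consPlaceholder, insertLetter_none_cons, *]

theorem head?_finsert_eq_some_none_iff (m : ℕ) (i i' : Fin k) (T : Sentence k) :
    (finsert k m i' T i).head? = some none ↔ (T i).head? = some none := by
  by_cases h : i = i'
  · subst h
    simp [finsert_eq_update, head?_insertLetter_eq_some_none_iff]
  · simp [finsert_eq_update, h]

theorem consPlaceholder_update_tail {i : Fin k} {T : Sentence k} (h : (T i).head? = some none) :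
    consPlaceholder i (Function.update T i (T i).tail) = T := by
  funext l
  by_cases hl : l = i
  · subst hl
    obtain ⟨w, hw⟩ := List.head?_eq_some_iff.1 h
    simp [consPlaceholder, hw]
  · simp [consPlaceholder, hl]

def SentenceEqOrConsPlaceholder (U V : Sentence k) : Prop :=
  U = V ∨ ∃ i, (V i).head? ≠ some none ∧ U = consPlaceholder i V

theorem alphaS_update (j : ℕ) (V : Sentence k) (i : Fin k) (w : Word) :
    alphaS k j (Function.update V i w) = Function.update (alphaS k j V) i (alphaWord j w) := by
  funext l
  by_cases hl : l = i
  · subst hl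
    simp [alphaS]
  · simp [alphaS, hl]

theorem sentenceEqOrConsPlaceholder_alphaS_update {j : ℕ} {V : Sentence k} {i : Fin k} {w : Word}
    (h : EqOrConsPlaceholder (alphaWord j w) (alphaWord j (V i))) :
    SentenceEqOrConsPlaceholder (alphaS k j (Function.update V i w)) (alphaS k j V) := by
  rw [alphaS_update]
  rcases h with h | ⟨hh, h⟩
  · exact .inl (by rw [h]; exact Function.update_eq_self i _)
  · exact .inr ⟨i, hh, by rw [h]; rfl⟩

theorem sentenceEqOrConsPlaceholder_alphaS_consPlaceholder (j : ℕ) (i : Fin k) (V : Sentence k) :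
    SentenceEqOrConsPlaceholder (alphaS k j (consPlaceholder i V)) (alphaS k j V) :=
  sentenceEqOrConsPlaceholder_alphaS_update (alphaWord_none_cons j (V i))

theorem sentenceEqOrConsPlaceholder_alphaS_finsert {j m : ℕ} (hjm : j ≤ m) (i : Fin k)
    (T : Sentence k) :
    SentenceEqOrConsPlaceholder (alphaS k j (finsert k m i T)) (alphaS k j T) :=
  sentenceEqOrConsPlaceholder_alphaS_update
    (alphaWord_insertLetter (x := m.succPNat) (by simp; omega) (T i))

end Sentence

section Levels

variable {k : ℕ}

theorem mem_Iset_succ {m : ℕ} {S : Sentence k} :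
    S ∈ Iset k (m + 1) ↔ ∃ i T, T ∈ Bset k m ∧ S = finsert k m i T := by
  rw [Iset]
  rfl

theorem consPlaceholder_mem_Bset_iff {m : ℕ}
    (hI : ∀ j ≤ m, ∀ U V : Sentence k,
      SentenceEqOrConsPlaceholder U V → (U ∈ Iset k j ↔ V ∈ Iset k j))
    {i : Fin k} {T : Sentence k} :
    consPlaceholder i T ∈ Bset k m ↔ T ∈ Bset k m ∧ (T i).head? ≠ some none := by
  have hα (j : ℕ) (hj : j ≤ m) :
      alphaS k j (consPlaceholder i T) ∈ Iset k j ↔ alphaS k j T ∈ Iset k j :=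
    hI j hj _ _ (sentenceEqOrConsPlaceholder_alphaS_consPlaceholder j i T)
  simp +contextual only [Bset, Set.mem_ofPred_eq, inA_consPlaceholder_iff, hα]
  tauto

theorem consPlaceholder_mem_Iset_succ_iff {m : ℕ}
    (hI : ∀ j ≤ m, ∀ U V : Sentence k,
      SentenceEqOrConsPlaceholder U V → (U ∈ Iset k j ↔ V ∈ Iset k j))
    {i : Fin k} {V : Sentence k} (hV : (V i).head? ≠ some none) :
    consPlaceholder i V ∈ Iset k (m + 1) ↔ V ∈ Iset k (m + 1) := by
  simp only [mem_Iset_succ]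
  constructor
  · rintro ⟨i', T, hT, hVT⟩
    have hTi : (T i).head? = some none := by
      rw [← head?_finsert_eq_some_none_iff m i i', ← hVT]
      simp [consPlaceholder]
    rw [← consPlaceholder_update_tail hTi, finsert_consPlaceholder] at hVT
    rw [← consPlaceholder_update_tail hTi] at hT
    exact ⟨i', _, ((consPlaceholder_mem_Bset_iff hI).1 hT).1, consPlaceholder_injective i hVT⟩
  · rintro ⟨i', T, hT, rfl⟩
    have hTi : (T i).head? ≠ some none := fun h => hV ((head?_finsert_eq_some_none_iff m i i' T).2 h)
    exact ⟨i', _, (consPlaceholder_mem_Bset_iff hI).2 ⟨hT, hTi⟩,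
      (finsert_consPlaceholder m i i' T).symm⟩

theorem mem_Iset_iff_of_sentenceEqOrConsPlaceholder (q : ℕ) :
    ∀ {U V : Sentence k}, SentenceEqOrConsPlaceholder U V → (U ∈ Iset k q ↔ V ∈ Iset k q) := by
  induction q using Nat.strong_induction_on with
  | _ q ih =>
  rintro U V (rfl | ⟨i, hV, rfl⟩)
  · rfl
  rcases q with _ | m
  · simp [Iset]
  · exact consPlaceholder_mem_Iset_succ_iff (fun j hj _ _ => ih j (by omega)) hV

theorem alphaS_finsert_notMem_Iset {j m : ℕ} {T : Sentence k} (hT : T ∈ Bset k m) (hj : 1 ≤ j)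
    (hjm : j ≤ m) (i : Fin k) : alphaS k j (finsert k m i T) ∉ Iset k j := by
  rw [mem_Iset_iff_of_sentenceEqOrConsPlaceholder j (sentenceEqOrConsPlaceholder_alphaS_finsert hjm i T)]
  exact hT.2 j hj hjm

theorem alphaS_alphaS {j j' : ℕ} (h : j ≤ j') (S : Sentence k) :
    alphaS k j (alphaS k j' S) = alphaS k j S :=
  funext fun i => alphaWord_alphaWord h (S i)

theorem alphaS_notMem_Iset_of_alphaS_eq_finsert {j m : ℕ} {S T : Sentence k} {i : Fin k}
    (hT : T ∈ Bset k m) (hS : alphaS k (m + 1) S = finsert k m i T) (hj : 1 ≤ j) (hjm : j ≤ m) :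
    alphaS k j S ∉ Iset k j := by
  rw [← alphaS_alphaS (by omega : j ≤ m + 1), hS]
  exact alphaS_finsert_notMem_Iset hT hj hjm i

theorem InA.some_notMem {n : ℕ} {S : Sentence k} (hS : InA k n S) {a : ℕ+} (ha : n < a)
    (l : Fin k) : some a ∉ S l := by
  have h := hS.2 a
  rw [if_neg (by omega)] at h
  exact List.count_eq_zero.1 (Finset.sum_eq_zero_iff.1 h l (Finset.mem_univ l))

theorem eq_of_finsert_eq {m : ℕ} {i i' : Fin k} {T T' : Sentence k} (hT' : InA k m T')
    (h : finsert k m i T = finsert k m i' T') : i = i' ∧ T = T' := by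
  obtain rfl : i = i' := by
    by_contra hne
    have hi := congrFun h i
    simp only [finsert_eq_update, Function.update_self, Function.update_of_ne hne] at hi
    exact hT'.some_notMem (a := m.succPNat) (by simp) i (hi ▸ some_mem_insertLetter _ (T i))
  refine ⟨rfl, funext fun l => ?_⟩
  have hl := congrFun h l
  by_cases hli : l = i
  · subst hli
    exact insertLetter_injective _ (by simpa [finsert_eq_update] using hl)
  · simpa [finsert_eq_update, hli] using hl

end Levels

theorem stmt_9_general (k : ℕ) (n : ℕ) (S : Sentence k)
    (hSA : InA k n S) (hSB : S ∉ Bset k n) :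
    ∃! x : ℕ × Fin k × Sentence k,
      1 ≤ x.1 ∧ x.1 ≤ n ∧ x.2.2 ∈ Bset k (x.1 - 1) ∧
        alphaS k x.1 S = finsert k (x.1 - 1) x.2.1 x.2.2 := by
  obtain ⟨j, hj, hjn, hS⟩ : ∃ j, 1 ≤ j ∧ j ≤ n ∧ alphaS k j S ∈ Iset k j := by
    by_contra! h
    exact hSB ⟨hSA, h⟩
  obtain ⟨m, rfl⟩ : ∃ m, j = m + 1 := ⟨j - 1, by omega⟩
  obtain ⟨i, T, hT, hST⟩ := mem_Iset_succ.1 hS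
  refine ⟨(m + 1, i, T), ⟨hj, hjn, hT, hST⟩, ?_⟩
  rintro ⟨j', i', T'⟩ ⟨hj', hj'n, hT', hST'⟩
  obtain ⟨m', rfl⟩ : ∃ m', j' = m' + 1 := ⟨j' - 1, by omega⟩
  have hS' : alphaS k (m' + 1) S ∈ Iset k (m' + 1) := mem_Iset_succ.2 ⟨i', T', hT', hST'⟩
  obtain rfl : m' = m := by
    by_contra hne
    rcases lt_or_gt_of_ne hne with h | h
    · exact alphaS_notMem_Iset_of_alphaS_eq_finsert hT hST hj' (by omega) hS'
    · exact alphaS_notMem_Iset_of_alphaS_eq_finsert hT' hST' hj (by omega) hS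
  obtain ⟨rfl, rfl⟩ := eq_of_finsert_eq hT.1 (hST'.symm.trans hST)
  rfl

/-- Fix `k ≥ 1` and `n ≥ 0`. The union `J_n = ⋃_{1 ≤ j ≤ n} α_{j,n}⁻¹(I_j)`
is disjoint and `A_n = B_n ⊔ ⨆_{j,i} α_{j,n}⁻¹(image f_{j-1}^i)`: for every sentence
`S ∈ A_n` with `S ∉ B_n` there exist unique `j ∈ {1,…,n}`, `i ∈ {1,…,k}` and `T' ∈ B_{j-1}`
with `α_{j,n}(S) = f_{j-1}^i(T')`. -/
theorem stmt_9 (k : ℕ) (hk : 1 ≤ k) (n : ℕ) (S : Sentence k)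
    (hSA : InA k n S) (hSB : S ∉ Bset k n) :
    ∃! x : ℕ × Fin k × Sentence k,
      1 ≤ x.1 ∧ x.1 ≤ n ∧ x.2.2 ∈ Bset k (x.1 - 1) ∧
        alphaS k x.1 S = finsert k (x.1 - 1) x.2.1 x.2.2 :=
  stmt_9_general k n S hSA hSB
end
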